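/- Let K ≥ 2 and suppose u_1,…,u_K : (0,∞) → ℝ are twice differentiable, satisfy the radial affine Toda system, satisfy ∑_{i=1}^K u_i(ρ) = 0 for all ρ > 0, and each u_i is bounded on [1,∞). Then ∑_{i=1}^K u_i(ρ)² decays exponentially at infinity: there exist constants C > 0, c > 0 and R > 0 such that ∑_{i=1}^K u_i(ρ)² ≤ C·e^{−cρ} for all ρ ≥ R. -/

import Mathlib

open scoped BigOperators

/-- Cyclic successor on `Fin K`. -/
def cycSucc {K : ℕ} (i : Fin K) : Fin K := ⟨((i : ℕ) + 1) % K, Nat.mod_lt _ i.pos⟩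

/-- Cyclic predecessor on `Fin K`. -/
def cycPred {K : ℕ} (i : Fin K) : Fin K := ⟨((i : ℕ) + (K - 1)) % K, Nat.mod_lt _ i.pos⟩

/-!
Write `F = ∑ uᵢ²`, `Δ = ∂²_ρ + ρ⁻¹ ∂_ρ` and `dᵢ = uᵢ - uᵢ₊₁`. By the Toda equations and summation by
parts around the cycle, `ΔF = 2 ∑ (uᵢ')² + 2 ∑ dᵢ e^{dᵢ}`; since `∑ dᵢ = 0`, the last sum is
`∑ dᵢ (e^{dᵢ} - 1) ≥ e^{-2B} ∑ dᵢ²` when `|uᵢ| ≤ B`. A discrete Poincaré inequality for mean-zero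
vectors on the cycle gives `F ≤ K² ∑ dᵢ²`, so `ΔF ≥ μ F` with `μ = 2 e^{-2B} / K²`. When
`c² + c ≤ μ`, the barriers `M e^{c(1-ρ)} + ε e^{cρ}` satisfy `ΔG ≤ μ G` for `ρ ≥ 1`, so by the
maximum principle they dominate the bounded subsolution `F ≤ M`; letting `ε → 0` gives the decay.
-/

open Filter Set Topology Real Finset

lemma cycPred_cycSucc {K : ℕ} (i : Fin K) : cycPred (cycSucc i) = i := by
  have hi := i.isLt
  ext
  change (((i : ℕ) + 1) % K + (K - 1)) % K = i
  rcases Nat.lt_or_ge ((i : ℕ) + 1) K with h | h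
  · rw [Nat.mod_eq_of_lt h, show (i : ℕ) + 1 + (K - 1) = i + K by omega, Nat.add_mod_right,
      Nat.mod_eq_of_lt hi]
  · rw [show (i : ℕ) + 1 = K by omega, Nat.mod_self, Nat.zero_add, Nat.mod_eq_of_lt (by omega)]
    omega

lemma cycSucc_bijective {K : ℕ} : Function.Bijective (cycSucc (K := K)) :=
  Finite.injective_iff_bijective.mp
    (Function.LeftInverse.injective (g := cycPred) cycPred_cycSucc)

lemma sum_comp_cycSucc {K : ℕ} {M : Type*} [AddCommMonoid M] (f : Fin K → M) :
    ∑ i, f (cycSucc i) = ∑ i, f i :=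
  Fintype.sum_bijective cycSucc cycSucc_bijective _ _ fun _ => rfl

lemma abs_sub_le_sum_abs_sub_cycSucc {K : ℕ} (v : Fin K → ℝ) (a b : Fin K) :
    |v a - v b| ≤ ∑ i, |v (cycSucc i) - v i| := by
  wlog hba : (b : ℕ) ≤ a generalizing a b
  · rw [abs_sub_comm]
    exact this b a (by omega)
  let w : ℕ → ℝ := fun l => v ⟨l % K, Nat.mod_lt _ a.pos⟩
  have hw : ∀ i : Fin K, w i = v i := fun i => congrArg v (Fin.ext (Nat.mod_eq_of_lt i.isLt))
  calc |v a - v b| = |∑ l ∈ Ico (b : ℕ) a, (w (l + 1) - w l)| := by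
        rw [sum_Ico_sub _ hba, hw, hw]
    _ ≤ ∑ l ∈ Ico (b : ℕ) a, |w (l + 1) - w l| := abs_sum_le_sum_abs _ _
    _ ≤ ∑ l ∈ range K, |w (l + 1) - w l| := by
        refine sum_le_sum_of_subset_of_nonneg (fun l hl => ?_) fun _ _ _ => abs_nonneg _
        simp only [Finset.mem_Ico, Finset.mem_range] at hl ⊢
        omega
    _ = ∑ i : Fin K, |v (cycSucc i) - v i| := by
        rw [← Fin.sum_univ_eq_sum_range]
        simp only [hw]
        rfl

lemma sum_sq_le_sq_mul_sum_sq_sub_cycSucc {K : ℕ} (v : Fin K → ℝ) (hv : ∑ i, v i = 0) :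
    ∑ i, v i ^ 2 ≤ (K : ℝ) ^ 2 * ∑ i, (v (cycSucc i) - v i) ^ 2 := by
  set S := ∑ i, |v (cycSucc i) - v i|
  have hS : 0 ≤ S := sum_nonneg fun _ _ => abs_nonneg _
  have habs : ∀ i, |v i| ≤ S := by
    intro i
    obtain ⟨j, hj⟩ : ∃ j, v j ≤ 0 := by
      by_contra! h
      exact (sum_pos (fun j _ => h j) ⟨i, mem_univ i⟩).ne' hv
    obtain ⟨k, hk⟩ : ∃ k, 0 ≤ v k := by
      by_contra! h
      exact (sum_neg (fun k _ => h k) ⟨i, mem_univ i⟩).ne hv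
    have hij := abs_sub_le_sum_abs_sub_cycSucc v i j
    have hki := abs_sub_le_sum_abs_sub_cycSucc v k i
    rw [abs_le] at hij hki ⊢
    constructor <;> linarith
  have hCS : S ^ 2 ≤ K * ∑ i, (v (cycSucc i) - v i) ^ 2 := by
    simpa [sq_abs] using
      sq_sum_le_card_mul_sum_sq (s := univ) (f := fun i => |v (cycSucc i) - v i|)
  calc ∑ i, v i ^ 2 ≤ ∑ _i : Fin K, S ^ 2 :=
        sum_le_sum fun i _ => sq_le_sq.2 (by rw [abs_of_nonneg hS]; exact habs i)
    _ = K * S ^ 2 := by simp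
    _ ≤ K * (K * ∑ i, (v (cycSucc i) - v i) ^ 2) := by gcongr
    _ = (K : ℝ) ^ 2 * ∑ i, (v (cycSucc i) - v i) ^ 2 := by ring

lemma sum_mul_sub_comp_cycPred {K : ℕ} (v : Fin K → ℝ) (g : ℝ → ℝ) :
    ∑ i, v i * (g (v i - v (cycSucc i)) - g (v (cycPred i) - v i))
      = ∑ i, (v i - v (cycSucc i)) * g (v i - v (cycSucc i)) := by
  have hshift : ∑ i, v i * g (v (cycPred i) - v i)
      = ∑ i, v (cycSucc i) * g (v i - v (cycSucc i)) := by
    rw [← sum_comp_cycSucc]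
    simp only [cycPred_cycSucc]
  simp only [mul_sub, sub_mul, sum_sub_distrib, hshift]

lemma exp_neg_mul_sq_le_mul_exp_sub_one {A x : ℝ} (h : |x| ≤ A) :
    exp (-A) * x ^ 2 ≤ x * (exp x - 1) := by
  rcases le_or_gt 0 x with hx | hx
  · have h1 : exp (-A) ≤ 1 := exp_le_one_iff.2 (by linarith [abs_nonneg x])
    nlinarith [add_one_le_exp x]
  · have h1 : exp (-A) ≤ exp x := exp_le_exp.2 (by linarith [abs_of_neg hx ▸ h])
    have h2 : -x * exp x ≤ 1 - exp x := by
      have := mul_le_mul_of_nonneg_left (add_one_le_exp (-x)) (exp_pos x).le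
      rw [← exp_add, add_neg_cancel, exp_zero] at this
      linarith
    nlinarith [mul_le_mul_of_nonneg_left h1 (sq_nonneg x),
      mul_le_mul_of_nonneg_left h2 (neg_nonneg.2 hx.le)]

lemma exp_neg_mul_sum_sq_le_sq_mul_sum_mul_toda {K : ℕ} (v : Fin K → ℝ)
    (hv : ∑ i, v i = 0) {B : ℝ} (hB : ∀ i, |v i| ≤ B) :
    exp (-(2 * B)) * ∑ i, v i ^ 2
      ≤ (K : ℝ) ^ 2 * ∑ i, v i * (exp (v i - v (cycSucc i)) - exp (v (cycPred i) - v i)) := by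
  rw [sum_mul_sub_comp_cycPred v exp]
  set d : Fin K → ℝ := fun i => v i - v (cycSucc i)
  have hd : ∑ i, d i = 0 := by simp only [d, sum_sub_distrib, sum_comp_cycSucc v, sub_self]
  have hdB : ∀ i, |d i| ≤ 2 * B := fun i =>
    (abs_sub _ _).trans (by linarith [hB i, hB (cycSucc i)])
  calc exp (-(2 * B)) * ∑ i, v i ^ 2
      ≤ exp (-(2 * B)) * ((K : ℝ) ^ 2 * ∑ i, (v (cycSucc i) - v i) ^ 2) := by
        gcongr
        exact sum_sq_le_sq_mul_sum_sq_sub_cycSucc v hv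
    _ = (K : ℝ) ^ 2 * ∑ i, exp (-(2 * B)) * d i ^ 2 := by
        rw [mul_sum, mul_sum, mul_sum]
        congr 1 with i
        ring
    _ ≤ (K : ℝ) ^ 2 * ∑ i, d i * (exp (d i) - 1) :=
        mul_le_mul_of_nonneg_left
          (sum_le_sum fun i _ => exp_neg_mul_sq_le_mul_exp_sub_one (hdB i)) (by positivity)
    _ = (K : ℝ) ^ 2 * ∑ i, d i * exp (d i) := by
        simp only [mul_sub, mul_one, sum_sub_distrib, hd, sub_zero]

lemma IsLocalMax.deriv_deriv_nonpos {f : ℝ → ℝ} {x : ℝ} (h : IsLocalMax f x)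
    (hc : ContinuousAt f x) : deriv (deriv f) x ≤ 0 := by
  by_contra! hpos
  -- if `f'' x > 0`, the second-derivative test makes `x` a local minimum too, so `f` is flat there
  have hmin := isLocalMin_of_deriv_deriv_pos hpos h.deriv_eq_zero hc
  have hflat : f =ᶠ[𝓝 x] fun _ => f x := (h.and hmin).mono fun y hy => le_antisymm hy.1 hy.2
  have : deriv (deriv f) x = 0 := by
    rw [hflat.deriv.deriv_eq]
    simp
  exact hpos.ne' this

/-- The Laplacian on `ℝ²` of the radial function `x ↦ f ‖x‖`, at radius `ρ > 0`. -/
noncomputable def radialLaplacian (f : ℝ → ℝ) (ρ : ℝ) : ℝ :=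
  deriv (deriv f) ρ + (1 / ρ) * deriv f ρ

lemma radialLaplacian_le_of_isLocalMax_sub {F G : ℝ → ℝ} {x : ℝ}
    (hF : ∀ᶠ y in 𝓝 x, DifferentiableAt ℝ F y) (hG : ∀ᶠ y in 𝓝 x, DifferentiableAt ℝ G y)
    (hF' : DifferentiableAt ℝ (deriv F) x) (hG' : DifferentiableAt ℝ (deriv G) x)
    (hmax : IsLocalMax (F - G) x) : radialLaplacian F x ≤ radialLaplacian G x := by
  have hderiv : deriv (F - G) =ᶠ[𝓝 x] deriv F - deriv G :=
    (hF.and hG).mono fun y hy => deriv_sub hy.1 hy.2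
  have h1 : deriv F x = deriv G x := by
    have := hmax.deriv_eq_zero
    rwa [hderiv.eq_of_nhds, Pi.sub_apply, sub_eq_zero] at this
  have h2 : deriv (deriv F) x ≤ deriv (deriv G) x := by
    have := hmax.deriv_deriv_nonpos
      (hF.self_of_nhds.continuousAt.sub hG.self_of_nhds.continuousAt)
    rwa [hderiv.deriv_eq, deriv_sub hF' hG', sub_nonpos] at this
  rw [radialLaplacian, radialLaplacian, h1]
  linarith

theorem le_of_subsolution_of_supersolution {F G : ℝ → ℝ} {a μ : ℝ} (hμ : 0 < μ)
    (hF : ∀ ρ, a ≤ ρ → DifferentiableAt ℝ F ρ ∧ DifferentiableAt ℝ (deriv F) ρ)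
    (hG : ∀ ρ, a ≤ ρ → DifferentiableAt ℝ G ρ ∧ DifferentiableAt ℝ (deriv G) ρ)
    (hFsub : ∀ ρ, a ≤ ρ → μ * F ρ ≤ radialLaplacian F ρ)
    (hGsup : ∀ ρ, a ≤ ρ → radialLaplacian G ρ ≤ μ * G ρ)
    (ha : F a ≤ G a) (hatTop : ∀ᶠ T in atTop, F T ≤ G T) :
    ∀ ρ, a ≤ ρ → F ρ ≤ G ρ := by
  intro σ hσ
  by_contra! hlt
  obtain ⟨T, hT, hσT⟩ := (hatTop.and (eventually_ge_atTop σ)).exists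
  have hcont : ContinuousOn (F - G) (Icc a T) := fun y hy =>
    ((hF y hy.1).1.continuousAt.sub (hG y hy.1).1.continuousAt).continuousWithinAt
  obtain ⟨x, hx, hmax⟩ := isCompact_Icc.exists_isMaxOn ⟨σ, hσ, hσT⟩ hcont
  have hpos : G x < F x := sub_pos.1 ((sub_pos.2 hlt).trans_le (hmax ⟨hσ, hσT⟩))
  have hax : a < x := hx.1.lt_of_ne (by rintro rfl; linarith)
  have hxT : x < T := hx.2.lt_of_ne (by rintro rfl; linarith)
  have hnear : ∀ᶠ y in 𝓝 x, a ≤ y := (eventually_gt_nhds hax).mono fun _ => le_of_lt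
  have hlap := radialLaplacian_le_of_isLocalMax_sub
    (hnear.mono fun y hy => (hF y hy).1) (hnear.mono fun y hy => (hG y hy).1)
    (hF x hx.1).2 (hG x hx.1).2 (hmax.isLocalMax (Icc_mem_nhds hax hxT))
  have := (hFsub x hx.1).trans (hlap.trans (hGsup x hx.1))
  linarith [(mul_lt_mul_iff_right₀ hμ).2 hpos]

noncomputable def barrier (A ε c t : ℝ) : ℝ := A * exp (-c * t) + ε * exp (c * t)

lemma hasDerivAt_barrier (A ε c t : ℝ) :
    HasDerivAt (barrier A ε c) (barrier (-c * A) (c * ε) c t) t := by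
  have hlin : ∀ k, HasDerivAt (fun t => exp (k * t)) (exp (k * t) * k) t := fun k => by
    simpa using ((hasDerivAt_id t).const_mul k).exp
  exact (((hlin (-c)).const_mul A).add ((hlin c).const_mul ε)).congr_deriv
    (by rw [barrier]; ring)

lemma deriv_barrier (A ε c : ℝ) : deriv (barrier A ε c) = barrier (-c * A) (c * ε) c :=
  funext fun t => (hasDerivAt_barrier A ε c t).deriv

lemma radialLaplacian_barrier_le {A ε c μ σ : ℝ} (hA : 0 ≤ A) (hε : 0 ≤ ε) (hc : 0 ≤ c)
    (hcμ : c ^ 2 + c ≤ μ) (hσ : 1 ≤ σ) :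
    radialLaplacian (barrier A ε c) σ ≤ μ * barrier A ε c σ := by
  have hcσ : c / σ ≤ c := div_le_self hc hσ
  have hcσ' : 0 ≤ c / σ := div_nonneg hc (by linarith)
  calc radialLaplacian (barrier A ε c) σ
      = A * (c ^ 2 - c / σ) * exp (-c * σ) + ε * (c ^ 2 + c / σ) * exp (c * σ) := by
        simp only [radialLaplacian, deriv_barrier, barrier]
        ring
    _ ≤ A * μ * exp (-c * σ) + ε * μ * exp (c * σ) := by
        gcongr <;> linarith
    _ = μ * barrier A ε c σ := by
        rw [barrier]
        ring

theorem le_mul_exp_neg_of_mul_le_radialLaplacian {F : ℝ → ℝ} {μ M c : ℝ} (hμ : 0 < μ)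
    (hM0 : 0 ≤ M) (hc : 0 < c) (hcμ : c ^ 2 + c ≤ μ)
    (hF : ∀ ρ, 1 ≤ ρ → DifferentiableAt ℝ F ρ ∧ DifferentiableAt ℝ (deriv F) ρ)
    (hFsub : ∀ ρ, 1 ≤ ρ → μ * F ρ ≤ radialLaplacian F ρ) (hM : ∀ ρ, 1 ≤ ρ → F ρ ≤ M) :
    ∀ ρ, 1 ≤ ρ → F ρ ≤ M * exp c * exp (-c * ρ) := by
  intro ρ hρ
  refine le_of_forall_pos_le_add fun δ hδ => ?_
  set ε := δ * exp (-c * ρ)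
  have hε : 0 < ε := by positivity
  have hbarrier := le_of_subsolution_of_supersolution (G := barrier (M * exp c) ε c) hμ hF
    (fun t _ => ⟨(hasDerivAt_barrier _ _ _ t).differentiableAt,
      deriv_barrier (M * exp c) ε c ▸ (hasDerivAt_barrier _ _ _ t).differentiableAt⟩)
    hFsub (fun t ht => radialLaplacian_barrier_le (by positivity) hε.le hc.le hcμ ht) ?at_one
    ?at_top ρ hρ
  · have hδ_eq : ε * exp (c * ρ) = δ := by rw [mul_assoc, ← exp_add]; simp
    rw [barrier, hδ_eq] at hbarrier
    exact hbarrier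
  case at_one =>
    have : M * exp c * exp (-c * 1) = M := by rw [mul_assoc, ← exp_add]; simp
    rw [barrier, this]
    linarith [hM 1 le_rfl, mul_pos hε (exp_pos (c * 1))]
  case at_top =>
    have hgrow : Tendsto (fun t => ε * exp (c * t)) atTop atTop :=
      (tendsto_exp_atTop.comp (tendsto_id.const_mul_atTop hc)).const_mul_atTop hε
    filter_upwards [hgrow.eventually_ge_atTop M, eventually_ge_atTop 1] with t hgt ht
    rw [barrier]
    linarith [hM t ht, mul_nonneg (mul_nonneg hM0 (exp_pos c).le) (exp_pos (-c * t)).le]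

theorem exists_le_mul_exp_neg_of_mul_le_radialLaplacian {F : ℝ → ℝ} {μ M : ℝ} (hμ : 0 < μ)
    (hM0 : 0 < M)
    (hF : ∀ ρ, 1 ≤ ρ → DifferentiableAt ℝ F ρ ∧ DifferentiableAt ℝ (deriv F) ρ)
    (hFsub : ∀ ρ, 1 ≤ ρ → μ * F ρ ≤ radialLaplacian F ρ) (hM : ∀ ρ, 1 ≤ ρ → F ρ ≤ M) :
    ∃ C, 0 < C ∧ ∃ c, 0 < c ∧ ∀ ρ, 1 ≤ ρ → F ρ ≤ C * exp (-c * ρ) := by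
  set c := min 1 (μ / 2)
  have hc : 0 < c := lt_min one_pos (half_pos hμ)
  have hcμ : c ^ 2 + c ≤ μ := by
    nlinarith [min_le_left 1 (μ / 2), min_le_right 1 (μ / 2)]
  exact ⟨M * exp c, by positivity, c, hc,
    le_mul_exp_neg_of_mul_le_radialLaplacian hμ hM0.le hc hcμ hF hFsub hM⟩

section SumSq

variable {ι : Type*} [Fintype ι] {u : ι → ℝ → ℝ} {x : ℝ}

lemma hasDerivAt_sum_sq (hu : ∀ i, DifferentiableAt ℝ (u i) x) :
    HasDerivAt (fun y => ∑ i, u i y ^ 2) (∑ i, 2 * u i x * deriv (u i) x) x :=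
  HasDerivAt.fun_sum fun i _ => by simpa using (hu i).hasDerivAt.fun_pow 2

lemma hasDerivAt_sum_mul_deriv (hu : ∀ i, DifferentiableAt ℝ (u i) x)
    (hu' : ∀ i, DifferentiableAt ℝ (deriv (u i)) x) :
    HasDerivAt (fun y => ∑ i, 2 * u i y * deriv (u i) y)
      (∑ i, 2 * (deriv (u i) x ^ 2 + u i x * deriv (deriv (u i)) x)) x :=
  HasDerivAt.fun_sum fun i _ => by
    simpa [mul_assoc, sq] using (((hu i).hasDerivAt.mul (hu' i).hasDerivAt).const_mul 2)

lemma deriv_sum_sq_eventuallyEq (hu : ∀ i, ∀ᶠ y in 𝓝 x, DifferentiableAt ℝ (u i) y) :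
    deriv (fun y => ∑ i, u i y ^ 2) =ᶠ[𝓝 x] fun y => ∑ i, 2 * u i y * deriv (u i) y :=
  (eventually_all.2 hu).mono fun _ hy => (hasDerivAt_sum_sq hy).deriv

lemma differentiableAt_deriv_sum_sq (hu : ∀ i, ∀ᶠ y in 𝓝 x, DifferentiableAt ℝ (u i) y)
    (hu' : ∀ i, DifferentiableAt ℝ (deriv (u i)) x) :
    DifferentiableAt ℝ (deriv fun y => ∑ i, u i y ^ 2) x :=
  (hasDerivAt_sum_mul_deriv (fun i => (hu i).self_of_nhds) hu').differentiableAt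
    |>.congr_of_eventuallyEq (deriv_sum_sq_eventuallyEq hu)

lemma radialLaplacian_sum_sq (hu : ∀ i, ∀ᶠ y in 𝓝 x, DifferentiableAt ℝ (u i) y)
    (hu' : ∀ i, DifferentiableAt ℝ (deriv (u i)) x) :
    radialLaplacian (fun y => ∑ i, u i y ^ 2) x
      = ∑ i, (2 * deriv (u i) x ^ 2 + 2 * u i x * radialLaplacian (u i) x) := by
  have hu₀ : ∀ i, DifferentiableAt ℝ (u i) x := fun i => (hu i).self_of_nhds
  rw [radialLaplacian, (deriv_sum_sq_eventuallyEq hu).deriv_eq,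
    (hasDerivAt_sum_mul_deriv hu₀ hu').deriv, (hasDerivAt_sum_sq hu₀).deriv, mul_sum,
    ← sum_add_distrib]
  congr 1 with i
  rw [radialLaplacian]
  ring

end SumSq

lemma mul_sum_sq_le_radialLaplacian_sum_sq_of_toda {K : ℕ} {u : Fin K → ℝ → ℝ} {ρ B : ℝ}
    (hu : ∀ i, ∀ᶠ y in 𝓝 ρ, DifferentiableAt ℝ (u i) y)
    (hu' : ∀ i, DifferentiableAt ℝ (deriv (u i)) ρ)
    (htoda : ∀ i, radialLaplacian (u i) ρ
      = exp (u i ρ - u (cycSucc i) ρ) - exp (u (cycPred i) ρ - u i ρ))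
    (hsum : ∑ i, u i ρ = 0) (hB : ∀ i, |u i ρ| ≤ B) :
    2 * exp (-(2 * B)) * ∑ i, u i ρ ^ 2
      ≤ (K : ℝ) ^ 2 * radialLaplacian (fun y => ∑ i, u i y ^ 2) ρ := by
  rw [radialLaplacian_sum_sq hu hu']
  calc 2 * exp (-(2 * B)) * ∑ i, u i ρ ^ 2
      ≤ 2 * ((K : ℝ) ^ 2 * ∑ i, u i ρ
          * (exp (u i ρ - u (cycSucc i) ρ) - exp (u (cycPred i) ρ - u i ρ))) := by
        rw [mul_assoc]
        exact mul_le_mul_of_nonneg_left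
          (exp_neg_mul_sum_sq_le_sq_mul_sum_mul_toda (fun i => u i ρ) hsum hB) zero_le_two
    _ = (K : ℝ) ^ 2 * ∑ i, 2 * u i ρ * radialLaplacian (u i) ρ := by
        simp only [htoda, mul_sum]
        congr 1 with i
        ring
    _ ≤ (K : ℝ) ^ 2 * ∑ i, (2 * deriv (u i) ρ ^ 2 + 2 * u i ρ * radialLaplacian (u i) ρ) := by
        gcongr with i
        exact le_add_of_nonneg_left (by positivity)

theorem toda_norm_squared_exponential_decay (K : ℕ) (hK : 2 ≤ K)
    (u : Fin K → ℝ → ℝ)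
    (hdiff : ∀ i, ∀ ρ : ℝ, 0 < ρ →
      DifferentiableAt ℝ (u i) ρ ∧ DifferentiableAt ℝ (deriv (u i)) ρ)
    (htoda : ∀ i, ∀ ρ : ℝ, 0 < ρ →
      deriv (deriv (u i)) ρ + (1 / ρ) * deriv (u i) ρ
        = Real.exp (u i ρ - u (cycSucc i) ρ) - Real.exp (u (cycPred i) ρ - u i ρ))
    (hsum : ∀ ρ : ℝ, 0 < ρ → ∑ i, u i ρ = 0)
    (hbdd : ∀ i, ∃ C : ℝ, ∀ ρ : ℝ, 1 ≤ ρ → |u i ρ| ≤ C) :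
    ∃ C : ℝ, 0 < C ∧ ∃ c : ℝ, 0 < c ∧ ∃ R : ℝ, 0 < R ∧
      ∀ ρ : ℝ, R ≤ ρ → ∑ i, (u i ρ) ^ 2 ≤ C * Real.exp (-c * ρ) := by
  obtain ⟨B, hB, hB0⟩ := ((eventually_all.2 fun i => (hbdd i).elim fun C hC =>
      (eventually_ge_atTop C).mono fun _ hCB ρ hρ => (hC ρ hρ).trans hCB).and
    (eventually_gt_atTop 0)).exists
  have hK2 : (0 : ℝ) < (K : ℝ) ^ 2 := by positivity
  have hnear : ∀ ρ, 1 ≤ ρ → ∀ i, ∀ᶠ y in 𝓝 ρ, DifferentiableAt ℝ (u i) y := fun ρ hρ i =>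
    (eventually_gt_nhds (by linarith : (0 : ℝ) < ρ)).mono fun y hy => (hdiff i y hy).1
  obtain ⟨C, hC, c, hc, hdecay⟩ := exists_le_mul_exp_neg_of_mul_le_radialLaplacian
    (μ := 2 * exp (-(2 * B)) / (K : ℝ) ^ 2) (M := K * B ^ 2) (by positivity) (by positivity)
    (fun ρ hρ => ⟨(hasDerivAt_sum_sq fun i => (hnear ρ hρ i).self_of_nhds).differentiableAt,
      differentiableAt_deriv_sum_sq (hnear ρ hρ) fun i => (hdiff i ρ (by linarith)).2⟩)
    (fun ρ hρ => by
      rw [div_mul_eq_mul_div, div_le_iff₀' hK2]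
      exact mul_sum_sq_le_radialLaplacian_sum_sq_of_toda (hnear ρ hρ)
        (fun i => (hdiff i ρ (by linarith)).2) (fun i => htoda i ρ (by linarith))
        (hsum ρ (by linarith)) fun i => hB i ρ hρ)
    (fun ρ hρ => by
      simpa using sum_le_card_nsmul univ (fun i => u i ρ ^ 2) (B ^ 2) fun i _ =>
        sq_le_sq' (abs_le.1 (hB i ρ hρ)).1 (abs_le.1 (hB i ρ hρ)).2)
  exact ⟨C, hC, c, hc, 1, one_pos, hdecay⟩
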